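/- Let R, R̂ ∈ SO(3), r_m, r_a, r̃_a ∈ ℝ³, c₀ ∈ (0, 1], c₁ > 0 with ‖r_m × r_a‖ ≥ c₀‖r_m‖‖r_a‖, ‖r_a‖ ≥ c₁, and r_m ≠ 0, and set b_m = Rᵀr_m, b_a = Rᵀr_a. Then |Φ₀(R̂, b_m, b_a, r_a − r̃_a) − Φ₀(R̂, b_m, b_a, r_a)| ≤ 2‖r̃_a‖/(c₁c₀²), where for r ∈ ℝ³, Φ₀(R̂, b_m, b_a, r) := 3 − r_mᵀ R̂ b_m/‖b_m‖² − (r_m × r)ᵀ R̂ (b_m × b_a)/‖b_m × b_a‖² − (r_m × (r_m × r))ᵀ R̂ (b_m × (b_m × b_a))/‖b_m × (b_m × b_a)‖². -/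

import Mathlib

open Matrix

/-- `R ∈ SO(3)`: `R Rᵀ = I` and `det R = 1`. -/
def IsSO3 (R : Matrix (Fin 3) (Fin 3) ℝ) : Prop := R * Rᵀ = 1 ∧ R.det = 1

/-- Euclidean norm on `ℝ³`. -/
noncomputable def vnorm (x : Fin 3 → ℝ) : ℝ := Real.sqrt (x ⬝ᵥ x)

/-- The measurable cost
`Φ₀(R̂, b_m, b_a, r) = 3 - r_mᵀR̂b_m/‖b_m‖² - (r_m×r)ᵀR̂(b_m×b_a)/‖b_m×b_a‖²
  - (r_m×(r_m×r))ᵀR̂(b_m×(b_m×b_a))/‖b_m×(b_m×b_a)‖²` (with `r_m` the inertial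
magnetic field vector). -/
noncomputable def Phi0 (Rh : Matrix (Fin 3) (Fin 3) ℝ) (rm bm ba r : Fin 3 → ℝ) : ℝ :=
  3 - (rm ⬝ᵥ Rh.mulVec bm) / (bm ⬝ᵥ bm)
    - ((rm ⨯₃ r) ⬝ᵥ Rh.mulVec (bm ⨯₃ ba)) / ((bm ⨯₃ ba) ⬝ᵥ (bm ⨯₃ ba))
    - ((rm ⨯₃ (rm ⨯₃ r)) ⬝ᵥ Rh.mulVec (bm ⨯₃ (bm ⨯₃ ba))) /
        ((bm ⨯₃ (bm ⨯₃ ba)) ⬝ᵥ (bm ⨯₃ (bm ⨯₃ ba)))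

/-!
The perturbation `r ↦ r - r̃_a` enters `Φ₀` only through its last two terms, which are linear
in `r`. Each is a quotient `(u ⬝ R̂ v) / ‖v‖²`, at most `‖u‖ / ‖v‖` by Cauchy–Schwarz since `R̂`
is orthogonal. Since `Rᵀ` preserves dot products, `‖b_m × b_a‖ = ‖r_m × r_a‖ =: C`, and since
`b_m ⊥ b_m × b_a`, `‖b_m × (b_m × b_a)‖ = ‖r_m‖ C`; with `‖r_m × x‖ ≤ ‖r_m‖ ‖x‖` both terms are
at most `‖r_m‖ ‖r̃_a‖ / C`. Observability gives `C ≥ c₀ ‖r_m‖ ‖r_a‖ ≥ c₀ c₁ ‖r_m‖`, and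
`c₀ ≤ 1` turns `1 / (c₀ c₁)` into the stated constant.
-/

lemma vnorm_eq_norm_toLp (x : Fin 3 → ℝ) : vnorm x = ‖WithLp.toLp 2 x‖ := by
  rw [EuclideanSpace.norm_eq, vnorm]
  simp [dotProduct, sq]

lemma dotProduct_self_nonneg (x : Fin 3 → ℝ) : 0 ≤ x ⬝ᵥ x := by
  simpa using dotProduct_self_star_nonneg x

lemma vnorm_nonneg (x : Fin 3 → ℝ) : 0 ≤ vnorm x := Real.sqrt_nonneg _

lemma vnorm_pos {x : Fin 3 → ℝ} (hx : x ≠ 0) : 0 < vnorm x := by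
  rw [vnorm_eq_norm_toLp]
  simpa using hx

lemma vnorm_sq (x : Fin 3 → ℝ) : vnorm x ^ 2 = x ⬝ᵥ x :=
  Real.sq_sqrt (dotProduct_self_nonneg x)

lemma abs_dotProduct_le_vnorm_mul (x y : Fin 3 → ℝ) : |x ⬝ᵥ y| ≤ vnorm x * vnorm y := by
  have h := abs_real_inner_le_norm (WithLp.toLp 2 x) (WithLp.toLp 2 y)
  rwa [EuclideanSpace.inner_toLp_toLp, star_trivial, dotProduct_comm, ← vnorm_eq_norm_toLp,
    ← vnorm_eq_norm_toLp] at h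

lemma vnorm_cross_le (x y : Fin 3 → ℝ) : vnorm (x ⨯₃ y) ≤ vnorm x * vnorm y := by
  simp only [vnorm_eq_norm_toLp, InnerProductGeometry.norm_toLp_symm_crossProduct]
  exact mul_le_of_le_one_right (by positivity) (Real.sin_le_one _)

lemma vnorm_cross_of_dotProduct_eq_zero {x y : Fin 3 → ℝ} (h : x ⬝ᵥ y = 0) :
    vnorm (x ⨯₃ y) = vnorm x * vnorm y := by
  rw [vnorm, cross_dot_cross, h, dotProduct_comm y x, h, mul_zero, sub_zero,
    Real.sqrt_mul (dotProduct_self_nonneg x), ← vnorm, ← vnorm]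

section Orthogonal

variable {A : Matrix (Fin 3) (Fin 3) ℝ} (hA : Aᵀ * A = 1)
include hA

lemma dotProduct_mulVec_mulVec_of_transpose_mul_self (x y : Fin 3 → ℝ) :
    A *ᵥ x ⬝ᵥ A *ᵥ y = x ⬝ᵥ y := by
  rw [dotProduct_mulVec, vecMul_mulVec, ← mulVec_transpose, hA, transpose_one, one_mulVec]

lemma vnorm_mulVec_of_transpose_mul_self (x : Fin 3 → ℝ) : vnorm (A *ᵥ x) = vnorm x := by
  rw [vnorm, dotProduct_mulVec_mulVec_of_transpose_mul_self hA, vnorm]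

lemma vnorm_cross_mulVec_of_transpose_mul_self (x y : Fin 3 → ℝ) :
    vnorm ((A *ᵥ x) ⨯₃ (A *ᵥ y)) = vnorm (x ⨯₃ y) := by
  simp only [vnorm, cross_dot_cross, dotProduct_mulVec_mulVec_of_transpose_mul_self hA]

lemma abs_dotProduct_mulVec_div_le (u v : Fin 3 → ℝ) :
    |(u ⬝ᵥ A *ᵥ v) / (v ⬝ᵥ v)| ≤ vnorm u / vnorm v := by
  rw [abs_div, abs_of_nonneg (dotProduct_self_nonneg v), ← vnorm_sq]
  calc |u ⬝ᵥ A *ᵥ v| / vnorm v ^ 2 ≤ vnorm u * vnorm v / vnorm v ^ 2 := by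
        gcongr
        rw [← vnorm_mulVec_of_transpose_mul_self hA v]
        exact abs_dotProduct_le_vnorm_mul u _
    _ = vnorm u / vnorm v := by
        rcases eq_or_ne (vnorm v) 0 with h | h
        · simp [h]
        · field_simp

end Orthogonal

lemma IsSO3.transpose_mul_self {R : Matrix (Fin 3) (Fin 3) ℝ} (hR : IsSO3 R) : Rᵀ * R = 1 :=
  mul_eq_one_comm.mp hR.1

lemma IsSO3.transpose {R : Matrix (Fin 3) (Fin 3) ℝ} (hR : IsSO3 R) : IsSO3 Rᵀ := by
  rw [IsSO3, transpose_transpose, det_transpose]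
  exact ⟨hR.transpose_mul_self, hR.2⟩

lemma vnorm_div_vnorm_cross_le {x y : Fin 3 → ℝ} {c₀ c₁ : ℝ}
    (hc₀ : 0 < c₀) (hc₁ : 0 < c₁)
    (hxy : c₀ * vnorm x * vnorm y ≤ vnorm (x ⨯₃ y)) (hy : c₁ ≤ vnorm y) (hx : x ≠ 0) :
    vnorm x / vnorm (x ⨯₃ y) ≤ 1 / (c₀ * c₁) := by
  have hx' := vnorm_pos hx
  have hy' := hc₁.trans_le hy
  have hcross : 0 < vnorm (x ⨯₃ y) := (by positivity : 0 < c₀ * vnorm x * vnorm y).trans_le hxy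
  rw [div_le_div_iff₀ hcross (by positivity)]
  nlinarith [mul_le_mul_of_nonneg_left hy (mul_nonneg hc₀.le hx'.le)]

lemma Phi0_sub_sub_Phi0 (Rh : Matrix (Fin 3) (Fin 3) ℝ) (rm bm ba r s : Fin 3 → ℝ) :
    Phi0 Rh rm bm ba (r - s) - Phi0 Rh rm bm ba r =
      (rm ⨯₃ s ⬝ᵥ Rh *ᵥ (bm ⨯₃ ba)) / (bm ⨯₃ ba ⬝ᵥ bm ⨯₃ ba) +
      (rm ⨯₃ (rm ⨯₃ s) ⬝ᵥ Rh *ᵥ (bm ⨯₃ (bm ⨯₃ ba))) /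
        (bm ⨯₃ (bm ⨯₃ ba) ⬝ᵥ bm ⨯₃ (bm ⨯₃ ba)) := by
  simp only [Phi0, map_sub, sub_dotProduct]
  ring

lemma abs_Phi0_sub_sub_Phi0_le {Rh : Matrix (Fin 3) (Fin 3) ℝ} (hRh : Rhᵀ * Rh = 1)
    (rm bm ba r s : Fin 3 → ℝ) :
    |Phi0 Rh rm bm ba (r - s) - Phi0 Rh rm bm ba r| ≤
      vnorm rm * vnorm s / vnorm (bm ⨯₃ ba) +
        vnorm rm * (vnorm rm * vnorm s) / (vnorm bm * vnorm (bm ⨯₃ ba)) := by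
  have hcross : vnorm (rm ⨯₃ (rm ⨯₃ s)) ≤ vnorm rm * (vnorm rm * vnorm s) :=
    (vnorm_cross_le _ _).trans (mul_le_mul_of_nonneg_left (vnorm_cross_le _ _) (vnorm_nonneg _))
  rw [Phi0_sub_sub_Phi0, ← vnorm_cross_of_dotProduct_eq_zero (dot_self_cross bm ba)]
  refine (abs_add_le _ _).trans (add_le_add ?_ ?_)
  · exact (abs_dotProduct_mulVec_div_le hRh _ _).trans
      (div_le_div_of_nonneg_right (vnorm_cross_le _ _) (vnorm_nonneg _))
  · exact (abs_dotProduct_mulVec_div_le hRh _ _).trans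
      (div_le_div_of_nonneg_right hcross (vnorm_nonneg _))

/-- `|Φ₀(R̂, b_m, b_a, r_a - r̃_a) - Φ₀(R̂, b_m, b_a, r_a)| ≤ 2‖r̃_a‖/(c₁ c₀²)`. -/
theorem stmt15 (R Rh : Matrix (Fin 3) (Fin 3) ℝ) (hR : IsSO3 R) (hRh : IsSO3 Rh)
    (rm ra rta : Fin 3 → ℝ) (c₀ c₁ : ℝ) (hc₀ : 0 < c₀) (hc₀' : c₀ ≤ 1) (hc₁ : 0 < c₁)
    (hobs : vnorm (rm ⨯₃ ra) ≥ c₀ * vnorm rm * vnorm ra)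
    (hra : vnorm ra ≥ c₁) (hrm : rm ≠ 0) :
    |Phi0 Rh rm (Rᵀ.mulVec rm) (Rᵀ.mulVec ra) (ra - rta) -
      Phi0 Rh rm (Rᵀ.mulVec rm) (Rᵀ.mulVec ra) ra| ≤ 2 * vnorm rta / (c₁ * c₀^2) := by
  have hRt := hR.transpose.transpose_mul_self
  have hdiff :=
    abs_Phi0_sub_sub_Phi0_le hRh.transpose_mul_self rm (Rᵀ *ᵥ rm) (Rᵀ *ᵥ ra) ra rta
  rw [vnorm_mulVec_of_transpose_mul_self hRt,
    vnorm_cross_mulVec_of_transpose_mul_self hRt] at hdiff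
  have hPC := vnorm_div_vnorm_cross_le hc₀ hc₁ hobs hra hrm
  have hP : 0 < vnorm rm := vnorm_pos hrm
  have hT : 0 ≤ vnorm rta := vnorm_nonneg rta
  set P := vnorm rm
  set C := vnorm (rm ⨯₃ ra)
  set T := vnorm rta
  calc _ ≤ P * T / C + P * (P * T) / (P * C) := hdiff
    _ = 2 * T * (P / C) := by field_simp; ring
    _ ≤ 2 * T * (1 / (c₀ * c₁)) := mul_le_mul_of_nonneg_left hPC (by positivity)
    _ ≤ 2 * T / (c₁ * c₀ ^ 2) := by
        rw [mul_one_div]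
        gcongr 2 * T / ?_
        nlinarith [mul_le_mul_of_nonneg_left hc₀' (mul_nonneg hc₁.le hc₀.le)]
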